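/- Let ρ be a state on a finite-dimensional Hilbert space and Π an orthogonal projection, with Π⊥ = 1 − Π. Then P(ρ, ΠρΠ) ≤ √( 2 Tr(ρΠ⊥) − (Tr(ρΠ⊥))² ). -/

import Mathlib

open scoped Matrix Kronecker BigOperators
open Matrix
open scoped ComplexOrder Classical

namespace Paper

/-- Total positive semidefinite square root (junk value `0` off the PSD cone). -/
noncomputable def psqrt {n : Type*} [Fintype n] [DecidableEq n] (A : Matrix n n ℂ) :
    Matrix n n ℂ :=
  if h : A.PosSemidef then
    (h.1.eigenvectorUnitary : Matrix n n ℂ) *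
      Matrix.diagonal (fun i => ((Real.sqrt (h.1.eigenvalues i) : ℝ) : ℂ)) *
      (star (h.1.eigenvectorUnitary : Matrix n n ℂ))
  else 0

/-- Trace norm `‖A‖₁ = Tr √(AᴴA)`. -/
noncomputable def traceNorm {n : Type*} [Fintype n] [DecidableEq n] (A : Matrix n n ℂ) : ℝ :=
  (psqrt (Aᴴ * A)).trace.re

/-- Fidelity `F(ρ,σ) = ‖√ρ√σ‖₁` of positive semidefinite matrices. -/
noncomputable def fidelity {n : Type*} [Fintype n] [DecidableEq n] (ρ σ : Matrix n n ℂ) : ℝ :=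
  traceNorm (psqrt ρ * psqrt σ)

/-- Purified distance `P(ρ,σ) = √(1 - F(ρ,σ)²)`. -/
noncomputable def purDist {n : Type*} [Fintype n] [DecidableEq n] (ρ σ : Matrix n n ℂ) : ℝ :=
  Real.sqrt (1 - fidelity ρ σ ^ 2)

/-- A state (density matrix): positive semidefinite with unit trace. -/
def IsState {n : Type*} [Fintype n] (ρ : Matrix n n ℂ) : Prop :=
  ρ.PosSemidef ∧ ρ.trace = 1

/-- A probability mass function on a finite alphabet. -/
def IsPMF {X : Type*} [Fintype X] (p : X → ℝ) : Prop :=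
  (∀ x, 0 ≤ p x) ∧ ∑ x, p x = 1

/-- Support inclusion `supp ρ ⊆ supp σ`, phrased via kernels (equivalent for PSD matrices). -/
def SuppSubset {n : Type*} [Fintype n] (ρ σ : Matrix n n ℂ) : Prop :=
  ∀ v : n → ℂ, σ.mulVec v = 0 → ρ.mulVec v = 0

/-- Loewner order `A ≤ B`. -/
def LLE {n : Type*} [Fintype n] (A B : Matrix n n ℂ) : Prop := (B - A).PosSemidef

/-- Binary logarithm of a Hermitian matrix, taken on its support via functional calculus
(`Real.logb 2 0 = 0` takes care of the kernel). -/
noncomputable def matLog {n : Type*} [Fintype n] [DecidableEq n] (A : Matrix n n ℂ) :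
    Matrix n n ℂ :=
  if hA : A.IsHermitian then
    (hA.eigenvectorUnitary : Matrix n n ℂ) *
      Matrix.diagonal (fun i => (Real.logb 2 (hA.eigenvalues i) : ℂ)) *
      (star (hA.eigenvectorUnitary : Matrix n n ℂ))
  else 0

/-- Quantum relative entropy (base 2): `D(ρ‖σ) = Tr(ρ log₂ ρ) - Tr(ρ log₂ σ)`. -/
noncomputable def relEnt {n : Type*} [Fintype n] [DecidableEq n] (ρ σ : Matrix n n ℂ) : ℝ :=
  ((ρ * matLog ρ).trace - (ρ * matLog σ).trace).re

/-- Max-relative entropy `D_max(ρ‖σ) = inf {λ | ρ ≤ 2^λ σ}`. -/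
noncomputable def dMax {n : Type*} [Fintype n] (ρ σ : Matrix n n ℂ) : ℝ :=
  sInf {l : ℝ | LLE ρ ((2 : ℝ) ^ l • σ)}

/-- Smooth max-relative entropy `D_max^ε(ρ‖σ) = min_{ρ' ∈ B^ε(ρ)} D_max(ρ'‖σ)`. -/
noncomputable def dMaxSmooth {n : Type*} [Fintype n] [DecidableEq n]
    (ε : ℝ) (ρ σ : Matrix n n ℂ) : ℝ :=
  sInf {d : ℝ | ∃ ρ' : Matrix n n ℂ, IsState ρ' ∧ purDist ρ' ρ ≤ ε ∧ d = dMax ρ' σ}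

/-- Partial trace over the second (B) factor. -/
noncomputable def ptraceB {a b : Type*} [Fintype b]
    (M : Matrix (a × b) (a × b) ℂ) : Matrix a a ℂ :=
  Matrix.of fun i j => ∑ k : b, M (i, k) (j, k)

/-- Partial trace over the first (A) factor. -/
noncomputable def ptraceA {a b : Type*} [Fintype a]
    (M : Matrix (a × b) (a × b) ℂ) : Matrix b b ℂ :=
  Matrix.of fun i j => ∑ k : a, M (k, i) (k, j)

/-- The cq state `Σ_x p(x) |x⟩⟨x| ⊗ ρ_x`. -/
noncomputable def cqState {X d : Type*} [Fintype X] [DecidableEq X] [Fintype d] [DecidableEq d]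
    (p : X → ℝ) (ρ : X → Matrix d d ℂ) : Matrix (X × d) (X × d) ℂ :=
  ∑ x, p x • (Matrix.single x x (1 : ℂ) ⊗ₖ ρ x)

/-- The Markov state `ρ^{A-X-B} = Σ_x p(x)|x⟩⟨x| ⊗ ρ_x^A ⊗ ρ_x^B` of a cq state. -/
noncomputable def markovState {X a b : Type*} [Fintype X] [DecidableEq X]
    [Fintype a] [DecidableEq a] [Fintype b] [DecidableEq b]
    (p : X → ℝ) (ρ : X → Matrix (a × b) (a × b) ℂ) :
    Matrix (X × (a × b)) (X × (a × b)) ℂ :=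
  cqState p fun x => ptraceB (ρ x) ⊗ₖ ptraceA (ρ x)

/-- Conditional mutual information `I(A;B|X)_ρ = D(ρ^{XAB} ‖ ρ^{A-X-B})` of a cq state. -/
noncomputable def condMI {X a b : Type*} [Fintype X] [DecidableEq X]
    [Fintype a] [DecidableEq a] [Fintype b] [DecidableEq b]
    (p : X → ℝ) (ρ : X → Matrix (a × b) (a × b) ℂ) : ℝ :=
  relEnt (cqState p ρ) (markovState p ρ)

/-- `D_max^ε(A;B|X)_ρ = D_max^ε(ρ^{XAB} ‖ ρ^{A-X-B})` of a cq state. -/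
noncomputable def condDmaxSmooth {X a b : Type*} [Fintype X] [DecidableEq X]
    [Fintype a] [DecidableEq a] [Fintype b] [DecidableEq b]
    (ε : ℝ) (p : X → ℝ) (ρ : X → Matrix (a × b) (a × b) ℂ) : ℝ :=
  dMaxSmooth ε (cqState p ρ) (markovState p ρ)

/-- `Ĩ_max^ε(A;B|X)_ρ`: minimum of `D_max(ρ' ‖ Σ_x p'(x)|x⟩⟨x| ⊗ ρ'^A_x ⊗ ρ^B_x)` over
cq states `ρ'` in the ε-ball around `ρ^{XAB}`. -/
noncomputable def condImaxTilde {X a b : Type*} [Fintype X] [DecidableEq X]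
    [Fintype a] [DecidableEq a] [Fintype b] [DecidableEq b]
    (ε : ℝ) (p : X → ℝ) (ρ : X → Matrix (a × b) (a × b) ℂ) : ℝ :=
  sInf {d : ℝ | ∃ (p' : X → ℝ) (ρ' : X → Matrix (a × b) (a × b) ℂ),
    IsPMF p' ∧ (∀ x, IsState (ρ' x)) ∧
    purDist (cqState p' ρ') (cqState p ρ) ≤ ε ∧
    d = dMax (cqState p' ρ') (cqState p' fun x => ptraceB (ρ' x) ⊗ₖ ptraceA (ρ x))}

/-- `Ĩ_max^ε(A;B)_ρ = inf_{ρ' ∈ B^ε(ρ)} D_max(ρ' ‖ ρ'^A ⊗ ρ^B)` for a bipartite state. -/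
noncomputable def bipImaxTilde {a b : Type*} [Fintype a] [DecidableEq a]
    [Fintype b] [DecidableEq b] (ε : ℝ) (ρ : Matrix (a × b) (a × b) ℂ) : ℝ :=
  sInf {d : ℝ | ∃ ρ' : Matrix (a × b) (a × b) ℂ, IsState ρ' ∧ purDist ρ' ρ ≤ ε ∧
    d = dMax ρ' (ptraceB ρ' ⊗ₖ ptraceA ρ)}

/-- The binary entropy function. -/
noncomputable def binEnt (ε : ℝ) : ℝ :=
  -(ε * Real.logb 2 ε) - (1 - ε) * Real.logb 2 (1 - ε)

/-- Hypothesis testing relative entropy `D_H^ε(ρ‖σ)`. -/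
noncomputable def dH {n : Type*} [Fintype n] [DecidableEq n] (ε : ℝ) (ρ σ : Matrix n n ℂ) : ℝ :=
  sSup {d : ℝ | ∃ Λ : Matrix n n ℂ, Λ.PosSemidef ∧ (1 - Λ).PosSemidef ∧
    1 - ε ≤ ((Λ * ρ).trace).re ∧ d = -Real.logb 2 (((Λ * σ).trace).re)}

/-- The convex-split state
`τ^{XAB₁…Bₙ} = Σ_x p(x)|x⟩⟨x| ⊗ (1/n) Σ_j ρ_x^{AB_j} ⊗ (⊗_{i≠j} σ_x^{B_i})`,
written entrywise on the index type `X × (A × Bⁿ)`. -/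
noncomputable def tauState {X a b : Type*} [Fintype X] [DecidableEq X]
    [Fintype a] [Fintype b]
    (p : X → ℝ) (ρ : X → Matrix (a × b) (a × b) ℂ) (σ : X → Matrix b b ℂ) (nn : ℕ) :
    Matrix (X × (a × (Fin nn → b))) (X × (a × (Fin nn → b))) ℂ :=
  Matrix.of fun q q' =>
    (if q.1 = q'.1 then (p q.1 : ℂ) else 0) *
      ((nn : ℂ)⁻¹ * ∑ j : Fin nn,
        ρ q.1 (q.2.1, q.2.2 j) (q'.2.1, q'.2.2 j) *
          ∏ i ∈ Finset.univ.erase j, σ q.1 (q.2.2 i) (q'.2.2 i))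

/-- The product reference state
`Σ_x p(x)|x⟩⟨x| ⊗ ρ_x^A ⊗ σ_x^{B₁} ⊗ … ⊗ σ_x^{Bₙ}`, entrywise. -/
noncomputable def refState {X a b : Type*} [Fintype X] [DecidableEq X]
    [Fintype a] [Fintype b]
    (p : X → ℝ) (ρ : X → Matrix (a × b) (a × b) ℂ) (σ : X → Matrix b b ℂ) (nn : ℕ) :
    Matrix (X × (a × (Fin nn → b))) (X × (a × (Fin nn → b))) ℂ :=
  Matrix.of fun q q' =>
    (if q.1 = q'.1 then (p q.1 : ℂ) else 0) *
      (ptraceB (ρ q.1) q.2.1 q'.2.1 * ∏ i : Fin nn, σ q.1 (q.2.2 i) (q'.2.2 i))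

/-!
The bound is an equality. For `σ = QρQ` the square root `√σ` satisfies `√σ Q = Q √σ = √σ`, so
`(√ρ √σ)ᴴ (√ρ √σ) = √σ ρ √σ = √σ σ √σ = σ²` and hence `F(ρ, σ) = Tr σ = Tr(ρQ) = 1 - Tr(ρ(1 - Q))`.
-/

section PSDSquareRoot

open scoped MatrixOrder

variable {n : Type*} [Fintype n] [DecidableEq n]

lemma psqrt_eq_cfc {A : Matrix n n ℂ} (hA : A.PosSemidef) : psqrt A = cfc Real.sqrt A := by
  rw [psqrt, dif_pos hA, hA.1.cfc_eq, IsHermitian.cfc, Unitary.conjStarAlgAut_apply]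
  rfl

lemma psqrt_posSemidef {A : Matrix n n ℂ} (hA : A.PosSemidef) : (psqrt A).PosSemidef := by
  rw [psqrt_eq_cfc hA, ← nonneg_iff_posSemidef]
  exact cfc_nonneg fun x _ => Real.sqrt_nonneg x

lemma mul_self_psqrt {A : Matrix n n ℂ} (hA : A.PosSemidef) : psqrt A * psqrt A = A := by
  have : IsSelfAdjoint A := hA.1
  rw [psqrt_eq_cfc hA, ← cfc_mul Real.sqrt Real.sqrt A]
  conv_rhs => rw [← cfc_id' ℝ A]
  exact cfc_congr fun x hx => Real.mul_self_sqrt (spectrum_nonneg_of_nonneg hA.nonneg hx)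

lemma psqrt_mul_self {B : Matrix n n ℂ} (hB : B.PosSemidef) : psqrt (B * B) = B := by
  have : IsSelfAdjoint B := hB.1
  have hBB : B * B = cfc (fun x : ℝ => x * x) B := by
    rw [cfc_mul (fun x : ℝ => x) (fun x : ℝ => x) B, cfc_id' ℝ B]
  rw [psqrt_eq_cfc (by simpa [pow_two] using hB.pow 2), hBB,
    ← cfc_comp Real.sqrt (fun x : ℝ => x * x) B]
  conv_rhs => rw [← cfc_id' ℝ B]
  exact cfc_congr fun x hx => Real.sqrt_mul_self (spectrum_nonneg_of_nonneg hB.nonneg hx)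

end PSDSquareRoot

section Pinching

variable {n : Type*} [Fintype n] [DecidableEq n]

lemma traceNorm_eq_trace_of_conjTranspose_mul_self_eq {A B : Matrix n n ℂ}
    (hB : B.PosSemidef) (hAB : Aᴴ * A = B * B) : traceNorm A = B.trace.re := by
  rw [traceNorm, hAB, psqrt_mul_self hB]

/-- `(√B (1 - Q))ᴴ (√B (1 - Q)) = (1 - Q) B (1 - Q) = 0`. -/
lemma psqrt_mul_eq_self {B Q : Matrix n n ℂ} (hB : B.PosSemidef) (hQ : Q.IsHermitian)
    (hBQ : B * Q = B) : psqrt B * Q = psqrt B := by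
  set s := psqrt B
  have hs : sᴴ = s := (psqrt_posSemidef hB).1
  have hQ' : (1 - Q)ᴴ = 1 - Q := by rw [conjTranspose_sub, conjTranspose_one, hQ.eq]
  have hB' : B * (1 - Q) = 0 := by rw [Matrix.mul_sub, Matrix.mul_one, hBQ, sub_self]
  have hzero : (s * (1 - Q))ᴴ * (s * (1 - Q)) = 0 := by
    rw [conjTranspose_mul, hQ', hs, Matrix.mul_assoc, ← Matrix.mul_assoc s s,
      mul_self_psqrt hB, hB', Matrix.mul_zero]
  have h := conjTranspose_mul_self_eq_zero.mp hzero
  rwa [Matrix.mul_sub, Matrix.mul_one, sub_eq_zero, eq_comm] at h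

lemma mul_psqrt_eq_self {B Q : Matrix n n ℂ} (hB : B.PosSemidef) (hQ : Q.IsHermitian)
    (hBQ : B * Q = B) : Q * psqrt B = psqrt B := by
  have hs : (psqrt B)ᴴ = psqrt B := (psqrt_posSemidef hB).1
  rw [← hs, ← hQ.eq, ← conjTranspose_mul, psqrt_mul_eq_self hB hQ hBQ]

lemma fidelity_conj_projection {ρ Q : Matrix n n ℂ} (hρ : ρ.PosSemidef) (hQ : Q.IsHermitian)
    (hQ2 : Q * Q = Q) : fidelity ρ (Q * ρ * Q) = (ρ * Q).trace.re := by
  set σ := Q * ρ * Q with hσ_def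
  have hσ : σ.PosSemidef := by simpa [hQ.eq] using hρ.mul_mul_conjTranspose_same Q
  have hσQ : σ * Q = σ := by rw [Matrix.mul_assoc, hQ2]
  have hsQ := psqrt_mul_eq_self hσ hQ hσQ
  have hQs := mul_psqrt_eq_self hσ hQ hσQ
  set s := psqrt σ
  have hs : sᴴ = s := (psqrt_posSemidef hσ).1
  have hss : s * s = σ := mul_self_psqrt hσ
  have hkey : (psqrt ρ * s)ᴴ * (psqrt ρ * s) = σ * σ :=
    calc (psqrt ρ * s)ᴴ * (psqrt ρ * s) = s * (psqrt ρ * psqrt ρ) * s := by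
          rw [conjTranspose_mul, hs, (psqrt_posSemidef hρ).1]; noncomm_ring
      _ = (s * Q) * ρ * (Q * s) := by rw [mul_self_psqrt hρ, hsQ, hQs]
      _ = s * σ * s := by rw [hσ_def]; noncomm_ring
      _ = σ * σ := by rw [← hss]; noncomm_ring
  rw [fidelity, traceNorm_eq_trace_of_conjTranspose_mul_self_eq hσ hkey, Matrix.trace_mul_comm,
    ← Matrix.mul_assoc, hQ2, Matrix.trace_mul_comm]

end Pinching

/-- `P(ρ, ΠρΠ) ≤ √(2 Tr(ρΠ⊥) − (Tr(ρΠ⊥))²)`. -/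
theorem purDist_projection {d : Type*} [Fintype d] [DecidableEq d]
    (ρ : Matrix d d ℂ) (hρ : IsState ρ)
    (Q : Matrix d d ℂ) (hQ : Q.IsHermitian) (hQ2 : Q * Q = Q) :
    purDist ρ (Q * ρ * Q) ≤
      Real.sqrt (2 * ((ρ * (1 - Q)).trace).re - ((ρ * (1 - Q)).trace).re ^ 2) := by
  obtain ⟨hρ, htr⟩ := hρ
  have hcompl : ((ρ * (1 - Q)).trace).re = 1 - ((ρ * Q).trace).re := by
    rw [Matrix.mul_sub, Matrix.mul_one, trace_sub, htr, Complex.sub_re, Complex.one_re]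
  rw [purDist, fidelity_conj_projection hρ hQ hQ2, hcompl]
  exact le_of_eq (by ring_nf)

end Paper
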